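/- If m and n are coprime odd positive integers, then for every integer k, G_k(mn) = G_k(m) G_k(n). -/

import Mathlib

open scoped BigOperators

noncomputable section

/-- The Gauss-type sum
`G_k(n) = ((1-i)/2 + (-1/n)(1+i)/2) ∑_{a mod n} (a/n) e(ak/n)` for odd `n`,
where `(·/n)` is the Jacobi symbol and `e(x) = e^{2πix}`. -/
def Gk (k : ℤ) (n : ℕ) : ℂ :=
  ((1 - Complex.I) / 2 + (jacobiSym (-1) n : ℂ) * (1 + Complex.I) / 2) *
    ∑ a ∈ Finset.range n, (jacobiSym a n : ℂ) *
      Complex.exp (2 * Real.pi * Complex.I * a * k / n)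

/-!
Write `G_k(n) = ε_n⁻¹ g_k(n)` with `g_k(n) = ∑_{a mod n} (a/n) e(ak/n)`. If `u n + v m = 1`, then
`e(ak/mn) = e(auk/m) e(avk/n)` and `(a/mn) = (a/m)(a/n)`, so the Chinese remainder theorem gives
`g_k(mn) = g_{uk}(m) g_{vk}(n)`. Substituting `a ↦ n a` in `g_{uk}(m)` shows `g_{uk}(m) = (n/m) g_k(m)`
because `n u ≡ 1 mod m`, and likewise `g_{vk}(n) = (m/n) g_k(n)`. Quadratic reciprocity,
`(m/n)(n/m) = (-1)^((m-1)(n-1)/4)`, is then exactly the identity `ε_{mn}⁻¹ (m/n)(n/m) = ε_m⁻¹ ε_n⁻¹`.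
-/

open Complex Finset Function Real

section PeriodicSums

variable {M : Type*} [AddCommMonoid M]

lemma sum_range_eq_sum_zmod (n : ℕ) [NeZero n] (f : ℕ → M) :
    ∑ a ∈ range n, f a = ∑ x : ZMod n, f x.val :=
  sum_nbij' (fun a => (a : ZMod n)) ZMod.val (by simp) (by simp [ZMod.val_lt])
    (fun a ha => ZMod.val_natCast_of_lt (mem_range.mp ha)) (by simp)
    (fun a ha => by rw [ZMod.val_natCast_of_lt (mem_range.mp ha)])

lemma Function.Periodic.map_emod {α : Type*} {f : ℤ → α} {c : ℤ} (hf : Periodic f c) (a : ℤ) :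
    f (a % c) = f a := by
  rw [Int.emod_def, mul_comm]
  exact hf.sub_int_mul_eq _

lemma Function.Periodic.map_val_intCast {α : Type*} {f : ℤ → α} {n : ℕ} [NeZero n]
    (hf : Periodic f n) (a : ℤ) : f (a : ZMod n).val = f a := by
  rw [ZMod.val_intCast, hf.map_emod]

lemma Function.Periodic.sum_range_comp_mul_left {f : ℤ → M} {n : ℕ} (hf : Periodic f n) {c : ℤ}
    (hc : IsCoprime c n) : ∑ a ∈ range n, f (c * a) = ∑ a ∈ range n, f a := by
  obtain rfl | hn := eq_or_ne n 0
  · simp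
  have := NeZero.mk hn
  obtain ⟨u, v, huv⟩ := hc
  have hunit : IsUnit (c : ZMod n) :=
    IsUnit.of_mul_eq_one_right (u : ZMod n) (by simpa using congrArg (Int.cast : ℤ → ZMod n) huv)
  rw [sum_range_eq_sum_zmod n (fun a => f (c * a)), sum_range_eq_sum_zmod n (fun a => f a)]
  refine Fintype.sum_bijective _ (IsUnit.isUnit_iff_mulLeft_bijective.mp hunit) _ _ fun x => ?_
  rw [← hf.map_val_intCast]
  simp

lemma Function.Periodic.sum_range_mul_mul {R : Type*} [CommSemiring R] {f g : ℤ → R} {m n : ℕ}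
    (hf : Periodic f m) (hg : Periodic g n) (hmn : m.Coprime n) :
    ∑ a ∈ range (m * n), f a * g a = (∑ a ∈ range m, f a) * ∑ a ∈ range n, g a := by
  obtain rfl | hm := eq_or_ne m 0
  · simp
  obtain rfl | hn := eq_or_ne n 0
  · simp
  have := NeZero.mk hm
  have := NeZero.mk hn
  rw [sum_range_eq_sum_zmod _ (fun a => f a * g a), sum_range_eq_sum_zmod _ (fun a => f a),
    sum_range_eq_sum_zmod _ (fun a => g a), sum_mul_sum, ← Fintype.sum_prod_type']
  refine Fintype.sum_equiv (ZMod.chineseRemainder hmn).toEquiv _ _ fun x => ?_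
  have hx : x = ((x.val : ℤ) : ZMod (m * n)) := by simp
  conv_rhs => rw [hx, RingEquiv.toEquiv_eq_coe, RingEquiv.coe_toEquiv, map_intCast]
  simp only [Prod.fst_intCast, Prod.snd_intCast, hf.map_val_intCast, hg.map_val_intCast]

end PeriodicSums

lemma exp_two_pi_I_div_eq_of_modEq {n : ℕ} {x y : ℤ} (h : x ≡ y [ZMOD n]) :
    exp (2 * π * I * x / n) = exp (2 * π * I * y / n) := by
  obtain rfl | hn := eq_or_ne n 0
  · simp
  obtain ⟨c, hc⟩ := h.dvd
  have hy : 2 * π * I * y / n = 2 * π * I * x / n + c * (2 * π * I) := by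
    rw [eq_add_of_sub_eq' hc]
    push_cast
    field_simp
  rw [hy, exp_periodic.int_mul c]

def jacobiGaussTerm (k : ℤ) (n : ℕ) (a : ℤ) : ℂ :=
  jacobiSym a n * exp (2 * π * I * (a * k : ℤ) / n)

def jacobiGaussSum (k : ℤ) (n : ℕ) : ℂ :=
  ∑ a ∈ range n, jacobiGaussTerm k n a

lemma jacobiGaussTerm_periodic (k : ℤ) (n : ℕ) : Periodic (jacobiGaussTerm k n) n := fun a => by
  have h : a + n ≡ a [ZMOD n] := Int.add_modEq_right
  rw [jacobiGaussTerm, jacobiGaussTerm, jacobiSym.mod_left' h,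
    exp_two_pi_I_div_eq_of_modEq (h.mul_right k)]

lemma jacobiGaussTerm_mul_left {c t k : ℤ} {n : ℕ} (h : c * t ≡ k [ZMOD n]) (a : ℤ) :
    jacobiGaussTerm t n (c * a) = jacobiSym c n * jacobiGaussTerm k n a := by
  have hexp : c * a * t ≡ a * k [ZMOD n] :=
    calc c * a * t = a * (c * t) := by ring
      _ ≡ a * k [ZMOD n] := h.mul_left a
  rw [jacobiGaussTerm, jacobiGaussTerm, jacobiSym.mul_left, exp_two_pi_I_div_eq_of_modEq hexp]
  push_cast
  ring

lemma jacobiGaussTerm_mul {m n : ℕ} (hm : m ≠ 0) (hn : n ≠ 0) {u v : ℤ} (huv : u * n + v * m = 1)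
    (k a : ℤ) :
    jacobiGaussTerm k (m * n) a = jacobiGaussTerm (u * k) m a * jacobiGaussTerm (v * k) n a := by
  have huv' : (u : ℂ) * n + v * m = 1 := by exact_mod_cast huv
  have hexp : 2 * π * I * (a * k : ℤ) / (m * n : ℕ) =
      2 * π * I * (a * (u * k) : ℤ) / m + 2 * π * I * (a * (v * k) : ℤ) / n := by
    push_cast
    field_simp
    linear_combination (-(a * k : ℂ)) * huv'
  simp only [jacobiGaussTerm]
  rw [jacobiSym.mul_right' _ hm hn, hexp, Complex.exp_add]
  push_cast
  ring

lemma jacobiGaussSum_eq_jacobiSym_mul {c t k : ℤ} {n : ℕ} (hc : IsCoprime c n)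
    (h : c * t ≡ k [ZMOD n]) : jacobiGaussSum t n = jacobiSym c n * jacobiGaussSum k n := by
  rw [jacobiGaussSum, ← (jacobiGaussTerm_periodic t n).sum_range_comp_mul_left hc, jacobiGaussSum,
    mul_sum]
  exact sum_congr rfl fun a _ => jacobiGaussTerm_mul_left h a

lemma jacobiGaussSum_mul {m n : ℕ} (hm : m ≠ 0) (hn : n ≠ 0) (hmn : m.Coprime n) (k : ℤ) :
    jacobiGaussSum k (m * n) =
      jacobiSym n m * jacobiSym m n * jacobiGaussSum k m * jacobiGaussSum k n := by
  obtain ⟨u, v, huv⟩ : IsCoprime (n : ℤ) m := Nat.isCoprime_iff_coprime.mpr hmn.symm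
  have hu : (n : ℤ) * (u * k) ≡ k [ZMOD m] :=
    Int.modEq_iff_dvd.mpr ⟨v * k, by linear_combination (-k) * huv⟩
  have hv : (m : ℤ) * (v * k) ≡ k [ZMOD n] :=
    Int.modEq_iff_dvd.mpr ⟨u * k, by linear_combination (-k) * huv⟩
  calc jacobiGaussSum k (m * n) = jacobiGaussSum (u * k) m * jacobiGaussSum (v * k) n := by
        rw [jacobiGaussSum, jacobiGaussSum, jacobiGaussSum,
          ← (jacobiGaussTerm_periodic _ m).sum_range_mul_mul (jacobiGaussTerm_periodic _ n) hmn]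
        exact sum_congr rfl fun a _ => jacobiGaussTerm_mul hm hn huv k a
    _ = _ := by
        rw [jacobiGaussSum_eq_jacobiSym_mul (Nat.isCoprime_iff_coprime.mpr hmn.symm) hu,
          jacobiGaussSum_eq_jacobiSym_mul (Nat.isCoprime_iff_coprime.mpr hmn) hv]
        ring

/-- `ε_n⁻¹`, where `ε_n = 1` or `i` according as `n ≡ 1` or `n ≡ 3 [MOD 4]`. -/
def epsInv (n : ℕ) : ℂ := (1 - I) / 2 + (jacobiSym (-1) n : ℂ) * (1 + I) / 2

lemma Gk_eq_epsInv_mul (k : ℤ) (n : ℕ) : Gk k n = epsInv n * jacobiGaussSum k n := by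
  rw [Gk, epsInv, jacobiGaussSum]
  congr 1
  refine sum_congr rfl fun a _ => ?_
  rw [jacobiGaussTerm]
  push_cast
  ring_nf

lemma epsInv_mul_mul_jacobiSym {m n : ℕ} (hm : Odd m) (hn : Odd n) (hmn : m.Coprime n) :
    epsInv (m * n) * (jacobiSym n m * jacobiSym m n) = epsInv m * epsInv n := by
  have hsq : (jacobiSym n m : ℂ) ^ 2 = 1 := by
    exact_mod_cast jacobiSym.sq_one (by simpa [Int.gcd_natCast_natCast] using hmn.symm)
  have hrec : (jacobiSym n m * jacobiSym m n : ℂ) = jacobiSym (ZMod.χ₄ n) m := by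
    rw [jacobiSym.quadratic_reciprocity' hm hn, qrSign]
    push_cast
    linear_combination (jacobiSym (ZMod.χ₄ n) m : ℂ) * hsq
  rw [hrec, epsInv, epsInv, epsInv, jacobiSym.at_neg_one (hm.mul hn), jacobiSym.at_neg_one hm,
    jacobiSym.at_neg_one hn, Nat.cast_mul, map_mul]
  rcases Nat.odd_mod_four_iff.mp (Nat.odd_iff.mp hn) with hn4 | hn4
  · rw [ZMod.χ₄_nat_one_mod_four hn4, jacobiSym.one_left]
    push_cast
    ring
  rw [ZMod.χ₄_nat_three_mod_four hn4, jacobiSym.at_neg_one hm]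
  rcases Nat.odd_mod_four_iff.mp (Nat.odd_iff.mp hm) with hm4 | hm4
  · rw [ZMod.χ₄_nat_one_mod_four hm4]
    push_cast
    ring
  · rw [ZMod.χ₄_nat_three_mod_four hm4]
    push_cast
    linear_combination (-1 : ℂ) * I_sq

theorem stmt6_general (m n : ℕ) (hm : Odd m) (hn : Odd n)
    (hmn : Nat.Coprime m n) (k : ℤ) :
    Gk k (m * n) = Gk k m * Gk k n := by
  rw [Gk_eq_epsInv_mul, Gk_eq_epsInv_mul, Gk_eq_epsInv_mul,
    jacobiGaussSum_mul hm.pos.ne' hn.pos.ne' hmn]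
  linear_combination (jacobiGaussSum k m * jacobiGaussSum k n) * epsInv_mul_mul_jacobiSym hm hn hmn

/-- Multiplicativity: for coprime odd positive `m, n`, `G_k(mn) = G_k(m) G_k(n)`. -/
theorem stmt6 (m n : ℕ) (hm : Odd m) (hn : Odd n) (hm0 : 0 < m) (hn0 : 0 < n)
    (hmn : Nat.Coprime m n) (k : ℤ) :
    Gk k (m * n) = Gk k m * Gk k n :=
  stmt6_general m n hm hn hmn k
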